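/- arXiv:2009.02145 — 3 statements merged into one kernel-verified Lean document; each statement's English description precedes it below -/
import Mathlib

section
/- Let E be a quasi-Banach function space on (0,∞) and let q ∈ (0,∞]. If E is an interpolation space for the couple (L_0, L_q), then there exists a constant c > 0 such that every linear operator T which is a contraction on (L_0, L_q) satisfies ‖T‖_{E→E} ≤ c. -/
open MeasureTheory ENNReal Set Filter

noncomputable section

namespace CSZ

/-- Lebesgue measure on the half line `(0,∞)`. -/
def m0 : Measure ℝ := volume.restrict (Set.Ioi (0:ℝ))

/-- The right-continuous decreasing rearrangement `μ(t,f)` of a function on `(0,∞)`: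
`μ(t,f) = inf {s ≥ 0 : m({|f| > s}) ≤ t}`. -/
def mu (f : ℝ → ℝ) (t : ℝ) : ℝ :=
  sInf {s : ℝ | 0 ≤ s ∧ m0 {x | s < |f x|} ≤ ENNReal.ofReal t}

/-- Head majorization `g ≺≺_hd f` : `∫_0^t μ(s,g) ds ≤ ∫_0^t μ(s,f) ds` for all `t > 0`. -/
def HeadMaj (g f : ℝ → ℝ) : Prop :=
  ∀ t : ℝ, 0 < t →
    ∫⁻ s in Set.Ioc (0:ℝ) t, ENNReal.ofReal (mu g s) ≤
      ∫⁻ s in Set.Ioc (0:ℝ) t, ENNReal.ofReal (mu f s)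

/-- Tail majorization `g ≺≺_tl f` : `∫_t^∞ μ(s,g) ds ≤ ∫_t^∞ μ(s,f) ds` for all `t > 0`. -/
def TailMaj (g f : ℝ → ℝ) : Prop :=
  ∀ t : ℝ, 0 < t →
    ∫⁻ s in Set.Ioi t, ENNReal.ofReal (mu g s) ≤
      ∫⁻ s in Set.Ioi t, ENNReal.ofReal (mu f s)

/-- The space `L_p(0,∞)`, `0 < p < ∞`. -/
def LpS (p : ℝ) : Set (ℝ → ℝ) :=
  {f | Measurable f ∧ ∫⁻ x, ENNReal.ofReal (|f x| ^ p) ∂m0 < ⊤}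

/-- The `L_p`-norm. -/
def LpNorm (p : ℝ) (f : ℝ → ℝ) : ℝ :=
  ((∫⁻ x, ENNReal.ofReal (|f x| ^ p) ∂m0) ^ (1/p)).toReal

/-- The space `L_∞(0,∞)`. -/
def LinftyS : Set (ℝ → ℝ) :=
  {f | Measurable f ∧ ∃ C : ℝ, ∀ᵐ x ∂m0, |f x| ≤ C}

/-- The `L_∞`-norm (essential supremum). -/
def LinftyNorm (f : ℝ → ℝ) : ℝ :=
  (essSup (fun x => ENNReal.ofReal |f x|) m0).toReal

/-- The space `L_0(0,∞)` of measurable functions with support of finite measure. -/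
def L0S : Set (ℝ → ℝ) :=
  {f | Measurable f ∧ m0 (Function.support f) < ⊤}

/-- The group "norm" on `L_0` : `‖f‖_0 = m(supp f)`. -/
def L0Norm (f : ℝ → ℝ) : ℝ := (m0 (Function.support f)).toReal

/-- The sum `X + Y` of two sets of functions. -/
def sumSet (X Y : Set (ℝ → ℝ)) : Set (ℝ → ℝ) :=
  {f | ∃ g ∈ X, ∃ h ∈ Y, f = g + h}

/-- A quasi-Banach function space on `(0,∞)` : a linear space of measurable functions,
equipped with a complete quasi-norm, such that `f ∈ E`, `g` measurable and `|g| ≤ |f|`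
imply `g ∈ E` and `‖g‖_E ≤ ‖f‖_E`. -/
structure QBFS where
  carrier : Set (ℝ → ℝ)
  qnorm : (ℝ → ℝ) → ℝ
  measurable_mem : ∀ f ∈ carrier, Measurable f
  zero_mem : (0 : ℝ → ℝ) ∈ carrier
  add_mem : ∀ f ∈ carrier, ∀ g ∈ carrier, f + g ∈ carrier
  smul_mem : ∀ (c : ℝ), ∀ f ∈ carrier, c • f ∈ carrier
  qnorm_nonneg : ∀ f, 0 ≤ qnorm f
  qnorm_eq_zero : ∀ f ∈ carrier, qnorm f = 0 → f = 0
  qnorm_smul : ∀ (c : ℝ) (f : ℝ → ℝ), qnorm (c • f) = |c| * qnorm f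
  quasi_triangle : ∃ C : ℝ, 1 ≤ C ∧ ∀ f g, qnorm (f + g) ≤ C * (qnorm f + qnorm g)
  ideal : ∀ f ∈ carrier, ∀ g : ℝ → ℝ, Measurable g →
    (∀ x, |g x| ≤ |f x|) → g ∈ carrier ∧ qnorm g ≤ qnorm f
  complete : ∀ u : ℕ → ℝ → ℝ, (∀ n, u n ∈ carrier) →
    (∀ ε : ℝ, 0 < ε → ∃ N : ℕ, ∀ j ≥ N, ∀ k ≥ N, qnorm (u j - u k) < ε) →
    ∃ f ∈ carrier, ∀ ε : ℝ, 0 < ε → ∃ N : ℕ, ∀ n ≥ N, qnorm (u n - f) < ε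

/-- `T` is linear on the subspace `S`. -/
def IsLinearOn (T : (ℝ → ℝ) → (ℝ → ℝ)) (S : Set (ℝ → ℝ)) : Prop :=
  (∀ f ∈ S, ∀ g ∈ S, T (f + g) = T f + T g) ∧
  (∀ (c : ℝ), ∀ f ∈ S, T (c • f) = c • T f)

/-- `T` maps `X` into `X` with bound `M` for the (quasi-)norm `N`. -/
def BoundedWith (T : (ℝ → ℝ) → (ℝ → ℝ)) (X : Set (ℝ → ℝ)) (N : (ℝ → ℝ) → ℝ) (M : ℝ) :
    Prop :=
  ∀ f ∈ X, T f ∈ X ∧ N (T f) ≤ M * N f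

/-- `T` maps `X` into `X` boundedly for the (quasi-)norm `N`. -/
def BoundedOn (T : (ℝ → ℝ) → (ℝ → ℝ)) (X : Set (ℝ → ℝ)) (N : (ℝ → ℝ) → ℝ) : Prop :=
  ∃ M : ℝ, 0 ≤ M ∧ BoundedWith T X N M

/-- `(E, NE)` is an interpolation space for the couple `((X,NX), (Y,NY))` :
`X ∩ Y ⊆ E ⊆ X + Y` and every linear operator on `X + Y` which is bounded from `X` to `X`
and from `Y` to `Y` maps `E` into `E` boundedly. -/
def IsInterpolation (X Y : Set (ℝ → ℝ)) (NX NY : (ℝ → ℝ) → ℝ)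
    (E : Set (ℝ → ℝ)) (NE : (ℝ → ℝ) → ℝ) : Prop :=
  X ∩ Y ⊆ E ∧ E ⊆ sumSet X Y ∧
  ∀ T : (ℝ → ℝ) → (ℝ → ℝ),
    IsLinearOn T (sumSet X Y) →
    (∀ f ∈ sumSet X Y, T f ∈ sumSet X Y) →
    BoundedOn T X NX → BoundedOn T Y NY →
    BoundedOn T E NE

end CSZ

namespace CSZ

/-- The space `L_q` for `q ∈ (0,∞]` (with `L_∞` for `q = ∞`). -/
def LqS (q : ℝ≥0∞) : Set (ℝ → ℝ) := if q = ⊤ then LinftyS else LpS q.toReal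

/-- The `L_q`-norm for `q ∈ (0,∞]`. -/
def LqNorm (q : ℝ≥0∞) : (ℝ → ℝ) → ℝ := if q = ⊤ then LinftyNorm else LpNorm q.toReal

end CSZ

/-!
Suppose there is no uniform bound. Cut every unit interval `[k, k+1)` into slots of lengths
`2^{-(n+1)}`, `n ∈ ℕ`. For contractions `T n`, the operator `glue T` places a copy of `T n f`,
compressed by the factor `2^{-(n+1)}`, in the `n`-th slot of every unit interval; as these
factors sum to `1`, `glue T` is again a contraction on `L_0` and on `L_q`, so the interpolation
property bounds it on `E` by some `K`. Reading off the `n`-th slot, `extract n (glue T f) = T n f`,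
and `extract n` is bounded on `L_0` and `L_q`, hence on `E` by some `M n`. So every `T n` has norm
at most `M n * K` on `E`, which fails once the `T n` are chosen with norms beyond `(n+1)(M n+1)`.
-/

open scoped Topology

namespace CSZ

theorem exists_boundedWith_of_glue {E : Set (ℝ → ℝ)} {N : (ℝ → ℝ) → ℝ}
    (hN : ∀ f ∈ E, 0 ≤ N f) (P : ((ℝ → ℝ) → ℝ → ℝ) → Prop)
    (glue : (ℕ → (ℝ → ℝ) → ℝ → ℝ) → (ℝ → ℝ) → ℝ → ℝ) (extract : ℕ → (ℝ → ℝ) → ℝ → ℝ)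
    (h_extract : ∀ n, BoundedOn (extract n) E N)
    (h_glue : ∀ Ts, (∀ n, P (Ts n)) → BoundedOn (glue Ts) E N)
    (h_extract_glue : ∀ Ts n f, extract n (glue Ts f) = Ts n f) :
    ∃ c, 0 < c ∧ ∀ T, P T → BoundedWith T E N c := by
  choose M hM₀ hM using h_extract
  by_contra! hcon
  have hbad n : ∃ T, P T ∧ ¬BoundedWith T E N ((n + 1) * (M n + 1)) :=
    hcon _ (by have := hM₀ n; positivity)
  choose Ts hP hTs using hbad
  obtain ⟨K, hK₀, hK⟩ := h_glue Ts hP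
  set n := ⌈K⌉₊
  refine hTs n fun f hf => ?_
  obtain ⟨hgf, hgf_le⟩ := hK f hf
  obtain ⟨hTf, hTf_le⟩ := hM n _ hgf
  rw [h_extract_glue] at hTf hTf_le
  refine ⟨hTf, hTf_le.trans ?_⟩
  have hKn : K ≤ n + 1 := (Nat.le_ceil K).trans (by linarith)
  calc M n * N (glue Ts f) ≤ M n * (K * N f) := mul_le_mul_of_nonneg_left hgf_le (hM₀ n)
    _ = M n * K * N f := by ring
    _ ≤ (n + 1) * (M n + 1) * N f :=
        mul_le_mul_of_nonneg_right (by nlinarith [hM₀ n]) (hN f hf)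

section SumSet

variable {X Y : Set (ℝ → ℝ)}

lemma subset_sumSet_left (hY : (0 : ℝ → ℝ) ∈ Y) : X ⊆ sumSet X Y :=
  fun f hf => ⟨f, hf, 0, hY, (add_zero f).symm⟩

lemma subset_sumSet_right (hX : (0 : ℝ → ℝ) ∈ X) : Y ⊆ sumSet X Y :=
  fun f hf => ⟨0, hX, f, hf, (zero_add f).symm⟩

lemma IsLinearOn.mapsTo_sumSet {T : (ℝ → ℝ) → ℝ → ℝ} (hT : IsLinearOn T (sumSet X Y))
    (hX : (0 : ℝ → ℝ) ∈ X) (hY : (0 : ℝ → ℝ) ∈ Y) {NX NY : (ℝ → ℝ) → ℝ}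
    (hTX : BoundedOn T X NX) (hTY : BoundedOn T Y NY) :
    ∀ f ∈ sumSet X Y, T f ∈ sumSet X Y := by
  rintro _ ⟨g, hg, h, hh, rfl⟩
  obtain ⟨_, _, hgX⟩ := hTX
  obtain ⟨_, _, hhY⟩ := hTY
  rw [hT.1 g (subset_sumSet_left hY hg) h (subset_sumSet_right hX hh)]
  exact ⟨T g, (hgX g hg).1, T h, (hhY h hh).1, rfl⟩

lemma IsInterpolation.boundedOn {NX NY : (ℝ → ℝ) → ℝ} {E : Set (ℝ → ℝ)} {NE : (ℝ → ℝ) → ℝ}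
    (hE : IsInterpolation X Y NX NY E NE) (hX : (0 : ℝ → ℝ) ∈ X) (hY : (0 : ℝ → ℝ) ∈ Y)
    {T : (ℝ → ℝ) → ℝ → ℝ} (hT : IsLinearOn T (sumSet X Y)) (hTX : BoundedOn T X NX)
    (hTY : BoundedOn T Y NY) : BoundedOn T E NE :=
  hE.2.2 T hT (hT.mapsTo_sumSet hX hY hTX hTY) hTX hTY

end SumSet

section Slots

def slotStart (n : ℕ) : ℝ := 1 - 2⁻¹ ^ n

def slotLength (n : ℕ) : ℝ := 2⁻¹ ^ (n + 1)

lemma slotLength_pos (n : ℕ) : 0 < slotLength n := by unfold slotLength; positivity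

lemma slotStart_add_slotLength (n : ℕ) : slotStart n + slotLength n = slotStart (n + 1) := by
  simp only [slotStart, slotLength, pow_succ]; ring

lemma slotStart_nonneg (n : ℕ) : 0 ≤ slotStart n :=
  sub_nonneg.2 (pow_le_one₀ (by norm_num) (by norm_num))

lemma slotStart_lt_one (n : ℕ) : slotStart n < 1 :=
  sub_lt_self _ (by positivity)

lemma slotStart_mono : Monotone slotStart :=
  monotone_nat_of_le_succ fun n => by
    rw [← slotStart_add_slotLength]; exact le_add_of_nonneg_right (slotLength_pos n).le

lemma exists_fract_lt_slotStart (y : ℝ) : ∃ n, Int.fract y < slotStart (n + 1) := by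
  obtain ⟨n, hn⟩ := exists_pow_lt_of_lt_one (sub_pos.2 (Int.fract_lt_one y))
    (by norm_num : (2⁻¹ : ℝ) < 1)
  refine ⟨n, ?_⟩
  have : (2⁻¹ : ℝ) ^ (n + 1) ≤ 2⁻¹ ^ n := pow_le_pow_of_le_one (by norm_num) (by norm_num) n.le_succ
  simp only [slotStart]; linarith

/-- The unit interval `[0,1)` is cut into the slots `[slotStart n, slotStart (n+1))`;
`slotIndex y` is the slot containing `fract y`. -/
def slotIndex (y : ℝ) : ℕ := Nat.find (exists_fract_lt_slotStart y)

lemma slotIndex_eq_iff {y : ℝ} {n : ℕ} :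
    slotIndex y = n ↔ Int.fract y ∈ Ico (slotStart n) (slotStart (n + 1)) := by
  rw [slotIndex, Nat.find_eq_iff, mem_Ico, and_comm]
  refine and_congr_left' ⟨fun h => ?_, fun h m hm => not_lt.2 ((slotStart_mono hm).trans h)⟩
  cases n with
  | zero => simp [slotStart, Int.fract_nonneg]
  | succ k => exact not_lt.1 (h k k.lt_succ_self)

lemma measurable_slotIndex : Measurable slotIndex :=
  measurable_to_countable' fun n => by
    have : slotIndex ⁻¹' {n} = Int.fract ⁻¹' Ico (slotStart n) (slotStart (n + 1)) := by
      ext y; exact slotIndex_eq_iff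
    rw [this]; exact measurable_fract measurableSet_Ico

def slot (n : ℕ) : Set ℝ := slotIndex ⁻¹' {n}

lemma measurableSet_slot (n : ℕ) : MeasurableSet (slot n) :=
  measurable_slotIndex (measurableSet_singleton n)

lemma iUnion_slot : ⋃ n, slot n = univ :=
  eq_univ_of_forall fun y => mem_iUnion.2 ⟨slotIndex y, rfl⟩

lemma pairwise_disjoint_slot : Pairwise (Function.onFun Disjoint slot) :=
  fun _ _ h => (disjoint_singleton.2 h).preimage slotIndex

/-- Affine bijection of `[k, k+1)` onto the `n`-th slot of `[k, k+1)`, for every integer `k`. -/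
def compress (n : ℕ) (x : ℝ) : ℝ := ⌊x⌋ + (slotStart n + slotLength n * Int.fract x)

def expand (n : ℕ) (y : ℝ) : ℝ := ⌊y⌋ + (Int.fract y - slotStart n) / slotLength n

lemma slotStart_add_slotLength_mul_mem {n : ℕ} {u : ℝ} (hu : u ∈ Ico (0 : ℝ) 1) :
    slotStart n + slotLength n * u ∈ Ico (slotStart n) (slotStart (n + 1)) := by
  have := slotLength_pos n
  rw [← slotStart_add_slotLength]
  constructor <;> nlinarith [hu.1, hu.2]

lemma Ico_slotStart_subset (n : ℕ) : Ico (slotStart n) (slotStart (n + 1)) ⊆ Ico 0 1 :=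
  Ico_subset_Ico (slotStart_nonneg n) (slotStart_lt_one _).le

lemma fract_compress (n : ℕ) (x : ℝ) :
    Int.fract (compress n x) = slotStart n + slotLength n * Int.fract x := by
  rw [compress, Int.fract_intCast_add, Int.fract_eq_self.2 (Ico_slotStart_subset n
    (slotStart_add_slotLength_mul_mem ⟨Int.fract_nonneg x, Int.fract_lt_one x⟩))]

lemma floor_compress (n : ℕ) (x : ℝ) : ⌊compress n x⌋ = ⌊x⌋ := by
  rw [compress, Int.floor_intCast_add, Int.floor_eq_zero_iff.2 (Ico_slotStart_subset n
    (slotStart_add_slotLength_mul_mem ⟨Int.fract_nonneg x, Int.fract_lt_one x⟩)), add_zero]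

lemma slotIndex_compress (n : ℕ) (x : ℝ) : slotIndex (compress n x) = n := by
  rw [slotIndex_eq_iff, fract_compress]
  exact slotStart_add_slotLength_mul_mem ⟨Int.fract_nonneg x, Int.fract_lt_one x⟩

lemma expand_compress (n : ℕ) (x : ℝ) : expand n (compress n x) = x := by
  rw [expand, fract_compress, floor_compress, add_sub_cancel_left,
    mul_div_cancel_left₀ _ (slotLength_pos n).ne', Int.floor_add_fract]

lemma compress_expand {n : ℕ} {y : ℝ} (h : slotIndex y = n) : compress n (expand n y) = y := by
  obtain ⟨h₁, h₂⟩ := slotIndex_eq_iff.1 h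
  have hs := slotLength_pos n
  have hu : (Int.fract y - slotStart n) / slotLength n ∈ Ico (0 : ℝ) 1 := by
    rw [← slotStart_add_slotLength] at h₂
    exact ⟨div_nonneg (by linarith) hs.le, (div_lt_one hs).2 (by linarith)⟩
  rw [compress, expand, Int.fract_intCast_add, Int.floor_intCast_add,
    Int.fract_eq_self.2 hu, Int.floor_eq_zero_iff.2 hu, Int.cast_add, Int.cast_zero, add_zero,
    mul_div_cancel₀ _ hs.ne', add_sub_cancel, Int.floor_add_fract]

lemma floor_expand {n : ℕ} {y : ℝ} (h : slotIndex y = n) : ⌊expand n y⌋ = ⌊y⌋ := by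
  conv_rhs => rw [← compress_expand h, floor_compress]

lemma image_compress (n : ℕ) (A : Set ℝ) : compress n '' A = slot n ∩ expand n ⁻¹' A := by
  ext y
  refine ⟨?_, fun ⟨hy, hA⟩ => ⟨expand n y, hA, compress_expand hy⟩⟩
  rintro ⟨x, hx, rfl⟩
  exact ⟨slotIndex_compress n x, by rwa [mem_preimage, expand_compress]⟩

lemma measurable_compress (n : ℕ) : Measurable (compress n) := by
  unfold compress; fun_prop

lemma measurable_expand (n : ℕ) : Measurable (expand n) := by
  unfold expand; fun_prop

lemma hasDerivAt_compress (n : ℕ) {x : ℝ} (hx : x ∉ range ((↑) : ℤ → ℝ)) :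
    HasDerivAt (compress n) (slotLength n) x := by
  have hfloor : ∀ᶠ z in 𝓝 x, ⌊z⌋ = ⌊x⌋ := by
    filter_upwards [Ioo_mem_nhds (Int.floor_lt_self_iff.2 hx) (Int.lt_floor_add_one x)] with z hz
    exact Int.floor_eq_iff.2 ⟨hz.1.le, hz.2⟩
  have : HasDerivAt (fun z => ⌊x⌋ + (slotStart n + slotLength n * (z - ⌊x⌋))) (slotLength n) x := by
    simpa using ((hasDerivAt_id x).sub_const (⌊x⌋ : ℝ)).const_mul (slotLength n)
      |>.const_add (slotStart n) |>.const_add (⌊x⌋ : ℝ)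
  refine this.congr_of_eventuallyEq ?_
  filter_upwards [hfloor] with z hz
  rw [compress, Int.fract, hz]

lemma compress_injective (n : ℕ) : Function.Injective (compress n) :=
  Function.LeftInverse.injective (expand_compress n)

end Slots

section SlotMeasure

lemma volume_image_compress (n : ℕ) {A : Set ℝ} (hA : MeasurableSet A) :
    volume (compress n '' A) = ENNReal.ofReal (slotLength n) * volume A := by
  have hZ : (range ((↑) : ℤ → ℝ)).Countable := countable_range _
  have hderiv : ∀ x ∈ A \ range ((↑) : ℤ → ℝ),
      HasDerivWithinAt (compress n) (slotLength n) (A \ range ((↑) : ℤ → ℝ)) x :=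
    fun x hx => (hasDerivAt_compress n hx.2).hasDerivWithinAt
  have h := lintegral_image_eq_lintegral_abs_deriv_mul (hA.diff hZ.measurableSet) hderiv
    (compress_injective n).injOn 1
  simp only [Pi.one_apply, mul_one, setLIntegral_one, setLIntegral_const,
    abs_of_pos (slotLength_pos n)] at h
  rwa [image_sdiff (compress_injective n), measure_sdiff_null ((hZ.image _).measure_zero _),
    measure_sdiff_null (hZ.measure_zero _)] at h

lemma map_expand_restrict_slot (n : ℕ) :
    (volume.restrict (slot n)).map (expand n) = ENNReal.ofReal (slotLength n) • volume := by
  ext A hA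
  rw [Measure.map_apply (measurable_expand n) hA, Measure.restrict_apply (measurable_expand n hA),
    Measure.smul_apply, smul_eq_mul, inter_comm, ← image_compress, volume_image_compress n hA]

lemma slot_inter_preimage_expand_Ici (n : ℕ) :
    slot n ∩ expand n ⁻¹' Ici 0 = slot n ∩ Ici 0 := by
  ext y
  refine and_congr_right fun hy => ?_
  rw [mem_preimage, mem_Ici, mem_Ici, ← Int.floor_nonneg, floor_expand hy, Int.floor_nonneg]

lemma m0_eq_restrict_Ici : m0 = volume.restrict (Ici 0) :=
  Measure.restrict_congr_set Ioi_ae_eq_Ici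

lemma map_expand_m0_restrict_slot (n : ℕ) :
    (m0.restrict (slot n)).map (expand n) = ENNReal.ofReal (slotLength n) • m0 := by
  rw [m0_eq_restrict_Ici, Measure.restrict_restrict (measurableSet_slot n),
    ← slot_inter_preimage_expand_Ici, inter_comm,
    ← Measure.restrict_restrict (measurable_expand n measurableSet_Ici),
    ← Measure.restrict_map (measurable_expand n) measurableSet_Ici, map_expand_restrict_slot,
    Measure.restrict_smul]

end SlotMeasure

section Glue

def glue (Ts : ℕ → (ℝ → ℝ) → ℝ → ℝ) (f : ℝ → ℝ) : ℝ → ℝ :=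
  fun y => Ts (slotIndex y) f (expand (slotIndex y) y)

def extract (n : ℕ) (h : ℝ → ℝ) : ℝ → ℝ := h ∘ compress n

lemma extract_glue (Ts : ℕ → (ℝ → ℝ) → ℝ → ℝ) (n : ℕ) (f : ℝ → ℝ) :
    extract n (glue Ts f) = Ts n f :=
  funext fun x => by simp only [extract, glue, Function.comp_apply, slotIndex_compress,
    expand_compress]

lemma glue_isLinearOn {S : Set (ℝ → ℝ)} {Ts : ℕ → (ℝ → ℝ) → ℝ → ℝ}
    (hTs : ∀ n, IsLinearOn (Ts n) S) : IsLinearOn (glue Ts) S :=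
  ⟨fun f hf g hg => funext fun y => by simp only [glue, (hTs _).1 f hf g hg, Pi.add_apply],
    fun c f hf => funext fun y => by simp only [glue, (hTs _).2 c f hf, Pi.smul_apply]⟩

lemma extract_isLinearOn (n : ℕ) (S : Set (ℝ → ℝ)) : IsLinearOn (extract n) S :=
  ⟨fun _ _ _ _ => rfl, fun _ _ _ => rfl⟩

lemma lintegral_comp_expand_slotIndex {F : ℕ → ℝ → ℝ≥0∞} (hF : ∀ n, Measurable (F n)) :
    ∫⁻ y, F (slotIndex y) (expand (slotIndex y) y) ∂m0 =
      ∑' n, ENNReal.ofReal (slotLength n) * ∫⁻ x, F n x ∂m0 := by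
  rw [← setLIntegral_univ, ← iUnion_slot,
    lintegral_iUnion measurableSet_slot pairwise_disjoint_slot]
  refine tsum_congr fun n => ?_
  rw [setLIntegral_congr_fun (measurableSet_slot n) (fun y (hy : slotIndex y = n) => by rw [hy]),
    ← lintegral_map (hF n) (measurable_expand n), map_expand_m0_restrict_slot,
    lintegral_smul_measure, smul_eq_mul]

lemma ae_comp_expand_slotIndex {P : ℕ → ℝ → Prop} (h : ∀ n, ∀ᵐ x ∂m0, P n x) :
    ∀ᵐ y ∂m0, P (slotIndex y) (expand (slotIndex y) y) := by
  rw [← Measure.restrict_univ (μ := m0), ← iUnion_slot, ae_restrict_iUnion_iff]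
  intro n
  have hP : ∀ᵐ y ∂m0.restrict (slot n), P n (expand n y) :=
    ae_of_ae_map (measurable_expand n).aemeasurable
      (by rw [map_expand_m0_restrict_slot]; exact Measure.ae_smul_measure (h n) _)
  filter_upwards [hP, ae_restrict_mem (measurableSet_slot n)] with y hy (hn : slotIndex y = n)
  rwa [hn]

lemma map_compress_m0_le (n : ℕ) :
    m0.map (compress n) ≤ ENNReal.ofReal (slotLength n)⁻¹ • m0 := by
  have hs := ENNReal.ofReal_pos.2 (slotLength_pos n)
  refine Measure.le_iff.2 fun B hB => ?_
  rw [Measure.map_apply (measurable_compress n) hB, Measure.smul_apply, smul_eq_mul,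
    ENNReal.ofReal_inv_of_pos (slotLength_pos n),
    ← ENNReal.mul_le_iff_le_inv hs.ne' ENNReal.ofReal_ne_top,
    ← smul_eq_mul, ← Measure.smul_apply, ← map_expand_m0_restrict_slot,
    Measure.map_apply (measurable_expand n) (measurable_compress n hB),
    Measure.restrict_apply (measurable_expand n (measurable_compress n hB))]
  refine measure_mono fun y ⟨hy, (hn : slotIndex y = n)⟩ => ?_
  rwa [mem_preimage, mem_preimage, compress_expand hn] at hy

lemma lintegral_comp_compress_le (n : ℕ) {G : ℝ → ℝ≥0∞} (hG : Measurable G) :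
    ∫⁻ x, G (compress n x) ∂m0 ≤ ENNReal.ofReal (slotLength n)⁻¹ * ∫⁻ x, G x ∂m0 := by
  rw [← lintegral_map hG (measurable_compress n), ← smul_eq_mul, ← lintegral_smul_measure]
  exact lintegral_mono' (map_compress_m0_le n) le_rfl

lemma ae_comp_compress {P : ℝ → Prop} (h : ∀ᵐ x ∂m0, P x) (n : ℕ) :
    ∀ᵐ x ∂m0, P (compress n x) :=
  ae_of_ae_map (measurable_compress n).aemeasurable
    (Measure.absolutelyContinuous_of_le_smul (map_compress_m0_le n) h)

lemma measurable_glue {Ts : ℕ → (ℝ → ℝ) → ℝ → ℝ} {f : ℝ → ℝ} (hm : ∀ n, Measurable (Ts n f)) :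
    Measurable (glue Ts f) :=
  (measurable_from_prod_countable_right (f := fun p : ℕ × ℝ => Ts p.1 f (expand p.1 p.2))
    fun n => (hm n).comp (measurable_expand n)).comp (measurable_slotIndex.prodMk measurable_id)

lemma tsum_ofReal_slotLength : ∑' n, ENNReal.ofReal (slotLength n) = 1 := by
  rw [← ENNReal.ofReal_tsum_of_nonneg (fun n => (slotLength_pos n).le)
    (summable_geometric_two.comp_injective (add_left_injective 1) |>.congr fun n => by
      simp [slotLength, one_div, inv_pow]), ← ENNReal.ofReal_one]
  congr 1
  simp only [slotLength, pow_succ, tsum_mul_right, tsum_geometric_inv_two]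
  norm_num

lemma lintegral_comp_glue_le {Ts : ℕ → (ℝ → ℝ) → ℝ → ℝ} {f : ℝ → ℝ} {Φ : ℝ → ℝ≥0∞}
    (hΦ : Measurable Φ) (hm : ∀ n, Measurable (Ts n f)) {I : ℝ≥0∞}
    (hI : ∀ n, ∫⁻ x, Φ (Ts n f x) ∂m0 ≤ I) :
    ∫⁻ y, Φ (glue Ts f y) ∂m0 ≤ I := by
  calc ∫⁻ y, Φ (glue Ts f y) ∂m0
      = ∑' n, ENNReal.ofReal (slotLength n) * ∫⁻ x, Φ (Ts n f x) ∂m0 :=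
        lintegral_comp_expand_slotIndex fun n => hΦ.comp (hm n)
    _ ≤ ∑' n, ENNReal.ofReal (slotLength n) * I := by gcongr with n; exact hI n
    _ = I := by rw [ENNReal.tsum_mul_right, tsum_ofReal_slotLength, one_mul]

end Glue

section L0

lemma zero_mem_L0S : (0 : ℝ → ℝ) ∈ L0S := ⟨measurable_const, by simp⟩

lemma m0_support_eq_lintegral {g : ℝ → ℝ} (hg : Measurable g) :
    m0 (Function.support g) = ∫⁻ x, ({0}ᶜ : Set ℝ).indicator 1 (g x) ∂m0 := by
  rw [Function.support_eq_preimage,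
    ← lintegral_indicator_one (hg (measurableSet_singleton 0).compl)]
  rfl

lemma boundedWith_L0S_of_le {T : (ℝ → ℝ) → ℝ → ℝ} {c : ℝ} (hc : 0 ≤ c)
    (hT : ∀ f ∈ L0S, Measurable (T f) ∧
      m0 (Function.support (T f)) ≤ ENNReal.ofReal c * m0 (Function.support f)) :
    BoundedWith T L0S L0Norm c := by
  intro f hf
  obtain ⟨hm, hle⟩ := hT f hf
  have hfin : ENNReal.ofReal c * m0 (Function.support f) ≠ ⊤ :=
    ENNReal.mul_ne_top ENNReal.ofReal_ne_top hf.2.ne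
  refine ⟨⟨hm, hle.trans_lt hfin.lt_top⟩, ?_⟩
  calc L0Norm (T f) ≤ (ENNReal.ofReal c * m0 (Function.support f)).toReal :=
        ENNReal.toReal_mono hfin hle
    _ = c * L0Norm f := by rw [ENNReal.toReal_mul, ENNReal.toReal_ofReal hc, L0Norm]

lemma m0_support_le_of_boundedWith_L0S {T : (ℝ → ℝ) → ℝ → ℝ} (hT : BoundedWith T L0S L0Norm 1)
    {f : ℝ → ℝ} (hf : f ∈ L0S) : m0 (Function.support (T f)) ≤ m0 (Function.support f) := by
  obtain ⟨hTf, hle⟩ := hT f hf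
  rwa [one_mul, L0Norm, L0Norm, ENNReal.toReal_le_toReal hTf.2.ne hf.2.ne] at hle

lemma glue_boundedWith_L0S {Ts : ℕ → (ℝ → ℝ) → ℝ → ℝ}
    (hTs : ∀ n, BoundedWith (Ts n) L0S L0Norm 1) : BoundedWith (glue Ts) L0S L0Norm 1 := by
  refine boundedWith_L0S_of_le zero_le_one fun f hf => ?_
  have hm n : Measurable (Ts n f) := (hTs n f hf).1.1
  refine ⟨measurable_glue hm, ?_⟩
  rw [ENNReal.ofReal_one, one_mul, m0_support_eq_lintegral (measurable_glue hm)]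
  refine lintegral_comp_glue_le (measurable_one.indicator (measurableSet_singleton 0).compl) hm
    fun n => ?_
  rw [← m0_support_eq_lintegral (hm n)]
  exact m0_support_le_of_boundedWith_L0S (hTs n) hf

lemma extract_boundedWith_L0S (n : ℕ) :
    BoundedWith (extract n) L0S L0Norm (slotLength n)⁻¹ := by
  refine boundedWith_L0S_of_le (inv_nonneg.2 (slotLength_pos n).le) fun h hh => ?_
  refine ⟨hh.1.comp (measurable_compress n), ?_⟩
  rw [extract, Function.support_comp_eq_preimage, ← Measure.map_apply (measurable_compress n)
    (measurableSet_support hh.1)]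
  exact map_compress_m0_le n _

end L0

section Lp

variable {p : ℝ}

lemma boundedWith_LpS_of_le (hp : 0 < p) {T : (ℝ → ℝ) → ℝ → ℝ} {c : ℝ} (hc : 0 ≤ c)
    (hT : ∀ f ∈ LpS p, Measurable (T f) ∧ ∫⁻ x, ENNReal.ofReal (|T f x| ^ p) ∂m0 ≤
      ENNReal.ofReal c * ∫⁻ x, ENNReal.ofReal (|f x| ^ p) ∂m0) :
    BoundedWith T (LpS p) (LpNorm p) (c ^ (1 / p)) := by
  intro f hf
  obtain ⟨hm, hle⟩ := hT f hf
  have hfin : ENNReal.ofReal c * ∫⁻ x, ENNReal.ofReal (|f x| ^ p) ∂m0 ≠ ⊤ :=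
    ENNReal.mul_ne_top ENNReal.ofReal_ne_top hf.2.ne
  refine ⟨⟨hm, hle.trans_lt hfin.lt_top⟩, ?_⟩
  calc LpNorm p (T f)
      ≤ ((ENNReal.ofReal c * ∫⁻ x, ENNReal.ofReal (|f x| ^ p) ∂m0) ^ (1 / p)).toReal :=
        ENNReal.toReal_mono (ENNReal.rpow_ne_top_of_nonneg (by positivity) hfin)
          (ENNReal.rpow_le_rpow hle (by positivity))
    _ = c ^ (1 / p) * LpNorm p f := by
        rw [ENNReal.mul_rpow_of_nonneg _ _ (by positivity), ENNReal.toReal_mul,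
          ENNReal.ofReal_rpow_of_nonneg hc (by positivity), ENNReal.toReal_ofReal (by positivity),
          LpNorm]

lemma lintegral_le_of_boundedWith_LpS (hp : 0 < p) {T : (ℝ → ℝ) → ℝ → ℝ}
    (hT : BoundedWith T (LpS p) (LpNorm p) 1) {f : ℝ → ℝ} (hf : f ∈ LpS p) :
    ∫⁻ x, ENNReal.ofReal (|T f x| ^ p) ∂m0 ≤ ∫⁻ x, ENNReal.ofReal (|f x| ^ p) ∂m0 := by
  obtain ⟨hTf, hle⟩ := hT f hf
  rwa [one_mul, LpNorm, LpNorm, ENNReal.toReal_le_toReal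
    (ENNReal.rpow_ne_top_of_nonneg (by positivity) hTf.2.ne)
    (ENNReal.rpow_ne_top_of_nonneg (by positivity) hf.2.ne),
    ENNReal.rpow_le_rpow_iff (by positivity)] at hle

lemma glue_boundedWith_LpS (hp : 0 < p) {Ts : ℕ → (ℝ → ℝ) → ℝ → ℝ}
    (hTs : ∀ n, BoundedWith (Ts n) (LpS p) (LpNorm p) 1) :
    BoundedWith (glue Ts) (LpS p) (LpNorm p) 1 := by
  have h := boundedWith_LpS_of_le hp zero_le_one fun f hf => by
    have hm n : Measurable (Ts n f) := (hTs n f hf).1.1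
    refine ⟨measurable_glue hm, ?_⟩
    rw [ENNReal.ofReal_one, one_mul]
    exact lintegral_comp_glue_le (Φ := fun t => ENNReal.ofReal (|t| ^ p)) (by fun_prop) hm
      fun n => lintegral_le_of_boundedWith_LpS hp (hTs n) hf
  rwa [Real.one_rpow] at h

lemma extract_boundedWith_LpS (hp : 0 < p) (n : ℕ) :
    BoundedWith (extract n) (LpS p) (LpNorm p) ((slotLength n)⁻¹ ^ (1 / p)) :=
  boundedWith_LpS_of_le hp (inv_nonneg.2 (slotLength_pos n).le) fun h hh =>
    ⟨hh.1.comp (measurable_compress n), lintegral_comp_compress_le n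
      ((show Measurable fun t : ℝ => ENNReal.ofReal (|t| ^ p) by fun_prop).comp hh.1)⟩

end Lp

section Linfty

lemma ae_abs_le_LinftyNorm {f : ℝ → ℝ} (hf : f ∈ LinftyS) :
    ∀ᵐ x ∂m0, |f x| ≤ LinftyNorm f := by
  obtain ⟨-, C, hC⟩ := hf
  have hne : essSup (fun x => ENNReal.ofReal |f x|) m0 ≠ ⊤ :=
    ne_top_of_le_ne_top ENNReal.ofReal_ne_top <| essSup_le_of_ae_le _ <| by
      filter_upwards [hC] with x hx using ENNReal.ofReal_le_ofReal hx
  filter_upwards [ae_le_essSup (fun x => ENNReal.ofReal |f x|)] with x hx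
  rw [← ENNReal.toReal_ofReal (abs_nonneg (f x))]
  exact ENNReal.toReal_mono hne hx

lemma LinftyNorm_le_of_ae_le {f : ℝ → ℝ} {B : ℝ} (hB : 0 ≤ B) (h : ∀ᵐ x ∂m0, |f x| ≤ B) :
    LinftyNorm f ≤ B := by
  rw [LinftyNorm, ← ENNReal.toReal_ofReal hB]
  exact ENNReal.toReal_mono ENNReal.ofReal_ne_top <| essSup_le_of_ae_le _ <| by
    filter_upwards [h] with x hx using ENNReal.ofReal_le_ofReal hx

lemma boundedWith_LinftyS_of_ae_le {T : (ℝ → ℝ) → ℝ → ℝ}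
    (hT : ∀ f ∈ LinftyS, Measurable (T f) ∧ ∀ᵐ x ∂m0, |T f x| ≤ LinftyNorm f) :
    BoundedWith T LinftyS LinftyNorm 1 := fun f hf =>
  ⟨⟨(hT f hf).1, _, (hT f hf).2⟩, by
    rw [one_mul]; exact LinftyNorm_le_of_ae_le ENNReal.toReal_nonneg (hT f hf).2⟩

lemma ae_abs_le_of_boundedWith_LinftyS {T : (ℝ → ℝ) → ℝ → ℝ}
    (hT : BoundedWith T LinftyS LinftyNorm 1) {f : ℝ → ℝ} (hf : f ∈ LinftyS) :
    ∀ᵐ x ∂m0, |T f x| ≤ LinftyNorm f := by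
  obtain ⟨hTf, hle⟩ := hT f hf
  filter_upwards [ae_abs_le_LinftyNorm hTf] with x hx using hx.trans (by rwa [one_mul] at hle)

lemma glue_boundedWith_LinftyS {Ts : ℕ → (ℝ → ℝ) → ℝ → ℝ}
    (hTs : ∀ n, BoundedWith (Ts n) LinftyS LinftyNorm 1) :
    BoundedWith (glue Ts) LinftyS LinftyNorm 1 :=
  boundedWith_LinftyS_of_ae_le fun f hf =>
    ⟨measurable_glue fun n => (hTs n f hf).1.1,
      ae_comp_expand_slotIndex (P := fun n x => |Ts n f x| ≤ LinftyNorm f)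
        fun n => ae_abs_le_of_boundedWith_LinftyS (hTs n) hf⟩

lemma extract_boundedWith_LinftyS (n : ℕ) : BoundedWith (extract n) LinftyS LinftyNorm 1 :=
  boundedWith_LinftyS_of_ae_le fun _ hh =>
    ⟨hh.1.comp (measurable_compress n), ae_comp_compress (ae_abs_le_LinftyNorm hh) n⟩

end Linfty

section Lq

variable {q : ℝ≥0∞}

lemma zero_mem_LqS (hq : 0 < q) : (0 : ℝ → ℝ) ∈ LqS q := by
  unfold LqS
  split_ifs with h
  · exact ⟨measurable_const, 0, ae_of_all _ fun x => by simp⟩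
  · refine ⟨measurable_const, ?_⟩
    simp [Real.zero_rpow (ENNReal.toReal_pos hq.ne' h).ne']

lemma glue_boundedWith_LqS (hq : 0 < q) {Ts : ℕ → (ℝ → ℝ) → ℝ → ℝ}
    (hTs : ∀ n, BoundedWith (Ts n) (LqS q) (LqNorm q) 1) :
    BoundedWith (glue Ts) (LqS q) (LqNorm q) 1 := by
  unfold LqS LqNorm at *
  split_ifs at * with h
  · exact glue_boundedWith_LinftyS hTs
  · exact glue_boundedWith_LpS (ENNReal.toReal_pos hq.ne' h) hTs

lemma extract_boundedOn_LqS (hq : 0 < q) (n : ℕ) : BoundedOn (extract n) (LqS q) (LqNorm q) := by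
  unfold LqS LqNorm
  split_ifs with h
  · exact ⟨1, zero_le_one, extract_boundedWith_LinftyS n⟩
  · exact ⟨_, Real.rpow_nonneg (inv_nonneg.2 (slotLength_pos n).le) _,
      extract_boundedWith_LpS (ENNReal.toReal_pos hq.ne' h) n⟩

end Lq

end CSZ

open CSZ MeasureTheory ENNReal Set in
/-- Theorem 3.1 of the paper.
Let `E` be a quasi-Banach function space on `(0,∞)` and `q ∈ (0,∞]`. If `E` is an
interpolation space for the couple `(L_0, L_q)`, then there is a constant `c > 0` such that
every linear operator `T` which is a contraction on `(L_0, L_q)` satisfies `‖T‖_{E→E} ≤ c`. -/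
theorem statement6 (q : ℝ≥0∞) (hq : 0 < q) (E : QBFS)
    (hE : IsInterpolation L0S (LqS q) L0Norm (LqNorm q) E.carrier E.qnorm) :
    ∃ c : ℝ, 0 < c ∧
      ∀ T : (ℝ → ℝ) → (ℝ → ℝ),
        IsLinearOn T (sumSet L0S (LqS q)) →
        (∀ f ∈ sumSet L0S (LqS q), T f ∈ sumSet L0S (LqS q)) →
        BoundedWith T L0S L0Norm 1 →
        BoundedWith T (LqS q) (LqNorm q) 1 →
        BoundedWith T E.carrier E.qnorm c := by
  obtain ⟨c, hc, hbound⟩ := exists_boundedWith_of_glue (fun f _ => E.qnorm_nonneg f)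
    (fun T => IsLinearOn T (sumSet L0S (LqS q)) ∧ BoundedWith T L0S L0Norm 1 ∧
      BoundedWith T (LqS q) (LqNorm q) 1)
    glue extract
    (fun n => hE.boundedOn zero_mem_L0S (zero_mem_LqS hq) (extract_isLinearOn n _)
      ⟨_, inv_nonneg.2 (slotLength_pos n).le, extract_boundedWith_L0S n⟩
      (extract_boundedOn_LqS hq n))
    (fun Ts hTs => hE.boundedOn zero_mem_L0S (zero_mem_LqS hq) (glue_isLinearOn fun n => (hTs n).1)
      ⟨1, zero_le_one, glue_boundedWith_L0S fun n => (hTs n).2.1⟩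
      ⟨1, zero_le_one, glue_boundedWith_LqS hq fun n => (hTs n).2.2⟩)
    extract_glue
  exact ⟨c, hc, fun T hlin _ h0 hLq => hbound T ⟨hlin, h0, hLq⟩⟩
end
end

section
/- Let f, g ∈ L_1 + L_∞ on (0,∞) be such that f = μ(f), g = μ(g) and g ≺≺_hd f. Then there exists a collection {Δ_k}_{k≥0} of pairwise disjoint measurable subsets of (0,∞) such that: (i) for every k, ∫_{Δ_k} g = ∫_{Δ_k} f and g·χ_{Δ_k} ≺≺_hd f·χ_{Δ_k} (i.e. the restriction of g to Δ_k is head-majorized with equal integrals by the restriction of f); (ii) g ≤ f on the complement of ∪_{k≥0} Δ_k. -/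
open MeasureTheory ENNReal Set Filter

noncomputable section

namespace CSZ

/-- `f` coincides with its decreasing rearrangement:
`f` is nonnegative, decreasing on `(0,∞)` and right-continuous. -/
def ShapeDR (f : ℝ → ℝ) : Prop :=
  (∀ x, 0 ≤ f x) ∧ AntitoneOn f (Set.Ioi 0) ∧
    ∀ x ∈ Set.Ioi (0:ℝ), ContinuousWithinAt f (Set.Ici x) x

end CSZ

/-!
Put `H(t) = ∫₀ᵗ (f - g)`. Since `f` and `g` are their own decreasing rearrangements, head
majorization says exactly that `H ≥ 0`. Apply F. Riesz's rising sun lemma to the continuous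
function `-H`: the set `E` of points `x` with `H y < H x` for some `y > x` is open, and a component
`(a, b)` of `E` satisfies `H a ≤ H` on `(a, b)` and `H a = H b` (for `b = ∞`:
`liminf_{t → ∞} H t ≤ H a`). The second fact gives equal integrals of `f` and `g` over the
component; the first gives head majorization of the restrictions, because the rearrangement of
`g·χ_(a,b)` is `g(a + ·)` cut off at `b - a`. Off `E`, `H` never drops to the right of a point,
which by right continuity forces `g ≤ f` there.
-/

open MeasureTheory Set Filter Topology Function TopologicalSpace

theorem MeasureTheory.LocallyIntegrable.integrableOn_Ioc {μ : Measure ℝ} {h : ℝ → ℝ}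
    (hi : LocallyIntegrable h μ) (a c : ℝ) : IntegrableOn h (Ioc a c) μ :=
  (hi.integrableOn_isCompact isCompact_Icc).mono_set Ioc_subset_Icc_self

theorem MeasureTheory.LocallyIntegrable.intervalIntegrable {μ : Measure ℝ} {h : ℝ → ℝ}
    (hi : LocallyIntegrable h μ) (a b : ℝ) : IntervalIntegrable h μ a b :=
  ⟨hi.integrableOn_Ioc a b, hi.integrableOn_Ioc b a⟩

theorem IsOpen.csInf_notMem {α : Type*} [ConditionallyCompleteLinearOrder α]
    [TopologicalSpace α] [OrderTopology α] [DenselyOrdered α] [NoMinOrder α] {s : Set α}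
    (hs : IsOpen s) (hb : BddBelow s) : sInf s ∉ s := by
  intro h
  obtain ⟨l, hl, hsub⟩ := exists_Ioc_subset_of_mem_nhds (hs.mem_nhds h) (exists_lt _)
  obtain ⟨y, hly, hya⟩ := exists_between hl
  exact (csInf_le hb (hsub ⟨hly, hya.le⟩)).not_gt hya

theorem IsOpen.csSup_notMem {α : Type*} [ConditionallyCompleteLinearOrder α]
    [TopologicalSpace α] [OrderTopology α] [DenselyOrdered α] [NoMaxOrder α] {s : Set α}
    (hs : IsOpen s) (hb : BddAbove s) : sSup s ∉ s :=
  IsOpen.csInf_notMem (α := αᵒᵈ) hs hb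

theorem IsOpen.exists_enumeration_connectedComponentIn {X : Type*} [TopologicalSpace X]
    [SeparableSpace X] [LocallyConnectedSpace X] {E : Set X} (hE : IsOpen E) :
    ∃ Δ : ℕ → Set X, Pairwise (Disjoint on Δ) ∧ ⋃ n, Δ n = E ∧
      ∀ n, Δ n = ∅ ∨ ∃ x ∈ E, Δ n = connectedComponentIn E x := by
  set C := {D | ∃ x ∈ E, connectedComponentIn E x = D}
  have hdisj : Pairwise (Disjoint on ((↑) : C → Set X)) := by
    intro ⟨D, x, hx, hD⟩ ⟨D', y, hy, hD'⟩ hne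
    subst hD hD'
    refine Set.disjoint_left.2 fun z hzx hzy => hne ?_
    rw [Subtype.mk.injEq, connectedComponentIn_eq hzx, connectedComponentIn_eq hzy]
  have : Countable C := by
    refine hdisj.countable_of_isOpen_disjoint (fun D => ?_) (fun D => ?_) <;>
      obtain ⟨_, x, hx, rfl⟩ := D
    exacts [hE.connectedComponentIn, ⟨x, mem_connectedComponentIn hx⟩]
  have := Encodable.ofCountable C
  -- `decode₂` enumerates the components injectively, padding with `∅`
  refine ⟨fun n => ⋃ D ∈ Encodable.decode₂ C n, (D : Set X),
    Encodable.iUnion_decode₂_disjoint_on hdisj, ?_, fun n => ?_⟩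
  · rw [Encodable.iUnion_decode₂]
    apply subset_antisymm
    · simp only [iUnion_subset_iff]
      rintro ⟨_, x, -, rfl⟩
      exact connectedComponentIn_subset E x
    · intro z hz
      exact mem_iUnion.2 ⟨⟨_, z, hz, rfl⟩, mem_connectedComponentIn hz⟩
  · refine Encodable.iUnion_decode₂_cases
      (C := fun D => D = ∅ ∨ ∃ x ∈ E, D = connectedComponentIn E x) (Or.inl rfl) ?_
    rintro ⟨_, x, hx, rfl⟩
    exact Or.inr ⟨x, hx, rfl⟩

theorem connectedComponentIn_eq_Ioo_or_Ioi {E : Set ℝ} (hE : IsOpen E) (hE0 : E ⊆ Ioi 0)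
    {x : ℝ} (hx : x ∈ E) :
    ∃ a, 0 ≤ a ∧ a ∉ E ∧
      ((∃ b, b ∉ E ∧ connectedComponentIn E x = Ioo a b) ∨ connectedComponentIn E x = Ioi a) := by
  set C := connectedComponentIn E x
  have hxC : x ∈ C := mem_connectedComponentIn hx
  have hCE : C ⊆ E := connectedComponentIn_subset E x
  have hCo : IsOpen C := hE.connectedComponentIn
  have hCc : IsConnected C := ⟨⟨x, hxC⟩, isPreconnected_connectedComponentIn⟩
  have hbdd : BddBelow C := ⟨0, fun y hy => (hE0 (hCE hy)).le⟩
  have haC := hCo.csInf_notMem hbdd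
  have hCa : C ⊆ Ioi (sInf C) := fun y hy =>
    lt_of_le_of_ne (csInf_le hbdd hy) (fun h => haC (h ▸ hy))
  have hax : sInf C < x := hCa hxC
  have hleft : sInf C ∉ E := by
    intro ha
    have hsub : Icc (sInf C) x ⊆ E := by
      intro y hy
      rcases eq_or_lt_of_le hy.1 with rfl | hy1
      · exact ha
      obtain ⟨z, hzC, hzy⟩ := (isGLB_lt_iff (isGLB_csInf ⟨x, hxC⟩ hbdd)).1 hy1
      exact hCE (hCc.Icc_subset hzC hxC ⟨hzy.le, hy.2⟩)
    exact haC (isPreconnected_Icc.subset_connectedComponentIn ⟨hax.le, le_rfl⟩ hsub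
      ⟨le_rfl, hax.le⟩)
  refine ⟨sInf C, le_csInf ⟨x, hxC⟩ fun y hy => (hE0 (hCE hy)).le, hleft, ?_⟩
  by_cases hbddA : BddAbove C
  · left
    have hbC := hCo.csSup_notMem hbddA
    have hCb : C ⊆ Iio (sSup C) := fun y hy =>
      lt_of_le_of_ne (le_csSup hbddA hy) (fun h => hbC (h ▸ hy))
    have hxb : x < sSup C := hCb hxC
    have hCeq : C = Ioo (sInf C) (sSup C) :=
      subset_antisymm (fun y hy => ⟨hCa hy, hCb hy⟩) (hCc.Ioo_csInf_csSup_subset hbdd hbddA)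
    refine ⟨sSup C, fun hb => hbC ?_, hCeq⟩
    have hsub : Icc x (sSup C) ⊆ E := by
      intro y hy
      rcases eq_or_lt_of_le hy.2 with rfl | hy2
      · exact hb
      exact hCE (hCeq ▸ ⟨hax.trans_le hy.1, hy2⟩)
    exact isPreconnected_Icc.subset_connectedComponentIn ⟨le_rfl, hxb.le⟩ hsub ⟨hxb.le, le_rfl⟩
  · right
    exact subset_antisymm hCa (hCc.isPreconnected.Ioi_csInf_subset hbdd hbddA)

/-- The shadow of F. Riesz's rising sun lemma for `-H`. -/
def shadow (H : ℝ → ℝ) : Set ℝ := {x | ∃ y, x < y ∧ H y < H x}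

section shadow

variable {H : ℝ → ℝ}

theorem isOpen_shadow (hH : Continuous H) : IsOpen (shadow H) := by
  rw [isOpen_iff_mem_nhds]
  rintro x ⟨y, hxy, hy⟩
  filter_upwards [hH.continuousAt.eventually (eventually_gt_nhds hy), Iio_mem_nhds hxy]
    with z hz hzy using ⟨y, hzy, hz⟩

theorem le_of_notMem_shadow {a c : ℝ} (ha : a ∉ shadow H) (hac : a ≤ c) : H a ≤ H c := by
  rcases eq_or_lt_of_le hac with rfl | hac
  · exact le_rfl
  · exact not_lt.1 fun h => ha ⟨c, hac, h⟩

theorem exists_ge_le_of_Ico_subset_shadow (hH : Continuous H) {x c : ℝ} (hxc : x ≤ c)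
    (hsub : Ico x c ⊆ shadow H) : ∃ y, c ≤ y ∧ H y ≤ H x := by
  obtain ⟨z, hz, hmin⟩ := isCompact_Icc.exists_isMinOn (nonempty_Icc.2 hxc) hH.continuousOn
  rcases eq_or_lt_of_le hz.2 with rfl | hzc
  · exact ⟨z, le_rfl, hmin (left_mem_Icc.2 hxc)⟩
  obtain ⟨y, hzy, hy⟩ := hsub ⟨hz.1, hzc⟩
  refine ⟨y, not_lt.1 fun hyc => (hmin ⟨hz.1.trans hzy.le, hyc.le⟩).not_gt hy, ?_⟩
  exact hy.le.trans (hmin (left_mem_Icc.2 hxc))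

theorem eq_of_Ioo_subset_shadow (hH : Continuous H) {a b : ℝ} (hab : a < b)
    (ha : a ∉ shadow H) (hb : b ∉ shadow H) (hsub : Ioo a b ⊆ shadow H) : H a = H b := by
  refine (le_of_notMem_shadow ha hab.le).antisymm ?_
  have hbx : ∀ x ∈ Ioo a b, H b ≤ H x := fun x hx => by
    obtain ⟨y, hby, hy⟩ := exists_ge_le_of_Ico_subset_shadow hH hx.2.le
      fun z hz => hsub ⟨hx.1.trans_le hz.1, hz.2⟩
    exact (le_of_notMem_shadow hb hby).trans hy
  exact ge_of_tendsto ((hH.tendsto a).mono_left (nhdsWithin_le_nhds (s := Ioi a)))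
    (mem_of_superset (Ioo_mem_nhdsGT hab) hbx)

theorem exists_ge_le_add_of_Ioi_subset_shadow (hH : Continuous H) {a : ℝ}
    (hsub : Ioi a ⊆ shadow H) (c : ℝ) {ε : ℝ} (hε : 0 < ε) : ∃ y, c ≤ y ∧ H y ≤ H a + ε := by
  obtain ⟨x, hxH, hax⟩ := ((hH.continuousWithinAt (s := Ioi a) (x := a)).eventually
    (eventually_lt_nhds (lt_add_of_pos_right (H a) hε)) |>.and self_mem_nhdsWithin).exists
  obtain ⟨y, hy, hyx⟩ := exists_ge_le_of_Ico_subset_shadow hH (le_max_left x c)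
    fun z hz => hsub (lt_of_lt_of_le hax hz.1)
  exact ⟨y, (le_max_right x c).trans hy, hyx.trans hxH.le⟩

end shadow

namespace CSZ

instance : IsLocallyFiniteMeasure m0 := by unfold m0; infer_instance

instance : NullSingletonClass m0 := by unfold m0; infer_instance

theorem m0_apply_of_subset_Ioi {s : Set ℝ} (hs : s ⊆ Ioi 0) : m0 s = volume s :=
  Measure.restrict_eq_self _ hs

theorem m0_restrict_of_subset_Ioi {s : Set ℝ} (hs : s ⊆ Ioi 0) :
    m0.restrict s = volume.restrict s := by
  rw [m0, Measure.restrict_restrict' measurableSet_Ioi, inter_eq_left.2 hs]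

theorem m0_Iio (s : ℝ) : m0 (Iio s) = ENNReal.ofReal s := by
  rw [m0, Measure.restrict_apply' measurableSet_Ioi, Iio_inter_Ioi, Real.volume_Ioo, sub_zero]

theorem locallyIntegrable_of_mem_sumSet {f : ℝ → ℝ} (hf : f ∈ sumSet (LpS 1) LinftyS) :
    LocallyIntegrable f m0 := by
  obtain ⟨p, ⟨hpm, hp⟩, q, ⟨hqm, C, hC⟩, rfl⟩ := hf
  have hpi : Integrable p m0 := ⟨hpm.aestronglyMeasurable, by
    simpa [hasFiniteIntegral_iff_norm, Real.norm_eq_abs] using hp⟩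
  exact hpi.locallyIntegrable.add
    ((memLp_top_of_bound hqm.aestronglyMeasurable C hC).locallyIntegrable le_top)

def excess (f g : ℝ → ℝ) (t : ℝ) : ℝ := ∫ x in (0:ℝ)..t, (f x - g x) ∂m0

section excess

variable {f g : ℝ → ℝ} (hf : LocallyIntegrable f m0) (hg : LocallyIntegrable g m0)
include hf hg

theorem continuous_excess : Continuous (excess f g) :=
  intervalIntegral.continuous_primitive (hf.sub hg).intervalIntegrable 0

theorem excess_sub_excess {a c : ℝ} (hac : a ≤ c) :
    excess f g c - excess f g a = ∫ x in Ioc a c, f x ∂m0 - ∫ x in Ioc a c, g x ∂m0 := by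
  rw [excess, excess, intervalIntegral.integral_interval_sub_left (f := fun x => f x - g x)
    ((hf.sub hg).intervalIntegrable 0 c) ((hf.sub hg).intervalIntegrable 0 a),
    intervalIntegral.integral_of_le hac, integral_sub (hf.integrableOn_Ioc a c)
    (hg.integrableOn_Ioc a c)]

end excess

theorem excess_of_nonpos {f g : ℝ → ℝ} {t : ℝ} (ht : t ≤ 0) : excess f g t = 0 := by
  have : m0.restrict (Ioc t 0) = 0 := by
    rw [m0, Measure.restrict_restrict measurableSet_Ioc, Ioc_inter_Ioi, max_eq_right ht,
      Ioc_self, Measure.restrict_empty]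
  rw [excess, intervalIntegral.integral_of_ge ht, this, integral_zero_measure, neg_zero]

theorem lintegral_Ioc_eq_ofReal {h : ℝ → ℝ} (hi : LocallyIntegrable h m0) (h0 : ∀ x, 0 ≤ h x)
    (a c : ℝ) :
    ∫⁻ x in Ioc a c, ENNReal.ofReal (h x) ∂m0 = ENNReal.ofReal (∫ x in Ioc a c, h x ∂m0) :=
  (ofReal_integral_eq_lintegral_ofReal (hi.integrableOn_Ioc a c) (Eventually.of_forall h0)).symm

section lintegral

variable {f g : ℝ → ℝ} (hf : LocallyIntegrable f m0) (hg : LocallyIntegrable g m0)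
  (hf0 : ∀ x, 0 ≤ f x) (hg0 : ∀ x, 0 ≤ g x)
include hf hg hf0 hg0

theorem excess_le_of_lintegral_Ioc_le {a c : ℝ} (hac : a ≤ c)
    (h : ∫⁻ x in Ioc a c, ENNReal.ofReal (g x) ∂m0 ≤ ∫⁻ x in Ioc a c, ENNReal.ofReal (f x) ∂m0) :
    excess f g a ≤ excess f g c := by
  rw [lintegral_Ioc_eq_ofReal hf hf0, lintegral_Ioc_eq_ofReal hg hg0,
    ENNReal.ofReal_le_ofReal_iff (setIntegral_nonneg measurableSet_Ioc fun x _ => hf0 x)] at h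
  linarith [excess_sub_excess hf hg hac]

theorem lintegral_Ioc_le_of_excess_le {a c : ℝ} (hac : a ≤ c)
    (h : excess f g a ≤ excess f g c) :
    ∫⁻ x in Ioc a c, ENNReal.ofReal (g x) ∂m0 ≤ ∫⁻ x in Ioc a c, ENNReal.ofReal (f x) ∂m0 := by
  rw [lintegral_Ioc_eq_ofReal hf hf0, lintegral_Ioc_eq_ofReal hg hg0]
  exact ENNReal.ofReal_le_ofReal (by linarith [excess_sub_excess hf hg hac])

theorem lintegral_Ioc_le_add_of_excess_le {a c ε : ℝ} (hac : a ≤ c) (hε : 0 ≤ ε)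
    (h : excess f g c ≤ excess f g a + ε) :
    ∫⁻ x in Ioc a c, ENNReal.ofReal (f x) ∂m0 ≤
      ∫⁻ x in Ioc a c, ENNReal.ofReal (g x) ∂m0 + ENNReal.ofReal ε := by
  rw [lintegral_Ioc_eq_ofReal hf hf0, lintegral_Ioc_eq_ofReal hg hg0,
    ← ENNReal.ofReal_add (setIntegral_nonneg measurableSet_Ioc fun x _ => hg0 x) hε]
  exact ENNReal.ofReal_le_ofReal (by linarith [excess_sub_excess hf hg hac])

end lintegral

theorem mu_eq_of_shapeDR {φ : ℝ → ℝ} (hφ : ShapeDR φ) {s : ℝ} (hs : 0 < s) : mu φ s = φ s := by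
  obtain ⟨h0, hanti, hrc⟩ := hφ
  refine IsLeast.csInf_eq ⟨⟨h0 s, ?_⟩, fun u ⟨hu0, hu⟩ => ?_⟩
  · refine (measure_mono fun x (hx : φ s < |φ x|) => ?_).trans (m0_Iio s).le
    refine show x < s from not_le.1 fun hsx => ?_
    rw [abs_of_nonneg (h0 x)] at hx
    exact (hanti hs (hs.trans_le hsx) hsx).not_gt hx
  · by_contra! hu_lt
    obtain ⟨c, hsc, hc⟩ := mem_nhdsGE_iff_exists_Ico_subset.1
      ((hrc s hs).eventually (lt_mem_nhds hu_lt))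
    have hsub : Ioo 0 c ⊆ {x | u < |φ x|} := fun x hx => by
      rw [mem_ofPred_eq, abs_of_nonneg (h0 x)]
      rcases le_or_gt x s with hxs | hsx
      · exact hu_lt.trans_le (hanti hx.1 hs hxs)
      · exact hc ⟨hsx.le, hx.2⟩
    have := (measure_mono hsub).trans hu
    rw [m0_apply_of_subset_Ioi Ioo_subset_Ioi_self, Real.volume_Ioo, sub_zero,
      ENNReal.ofReal_le_ofReal_iff hs.le] at this
    exact lt_irrefl _ (this.trans_lt hsc)

theorem mu_comp_add {ψ : ℝ → ℝ} {a : ℝ} (ha : 0 ≤ a) (hψ : ∀ x ≤ a, ψ x = 0) :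
    mu (fun s => ψ (a + s)) = mu ψ := by
  have hlevel : ∀ u, 0 ≤ u → {x | u < |ψ x|} ⊆ Ioi a := fun u hu x hx =>
    show a < x from not_le.1 fun hxa => not_lt.2 hu (by simpa [hψ x hxa] using hx)
  funext t
  unfold mu
  congr 1
  ext u
  refine and_congr_right fun hu => ?_
  have hshift : {s | u < |ψ (a + s)|} ⊆ Ioi 0 := fun s hs => by simpa using hlevel u hu hs
  rw [m0_apply_of_subset_Ioi hshift,
    m0_apply_of_subset_Ioi ((hlevel u hu).trans (Ioi_subset_Ioi ha)), show volume {s | u < |ψ (a + s)|} = volume {x | u < |ψ x|} from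
    measure_preimage_add volume a {x | u < |ψ x|}]

theorem shapeDR_indicator_comp_add {h : ℝ → ℝ} (hh : ShapeDR h) {a : ℝ} (ha : 0 ≤ a)
    {S : Set ℝ} (hSo : IsOpen S) (hSl : IsLowerSet S) :
    ShapeDR (fun s => (Ioi a ∩ S).indicator h (a + s)) := by
  obtain ⟨h0, hanti, hrc⟩ := hh
  have hpos : ∀ {s : ℝ}, 0 < s → a + s ∈ Ioi 0 := add_pos_of_nonneg_of_pos ha
  have hmem : ∀ {s : ℝ}, 0 < s → a + s ∈ S → a + s ∈ Ioi a ∩ S := fun hs hS =>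
    ⟨lt_add_of_pos_right a hs, hS⟩
  have hnotMem : ∀ {s : ℝ}, a + s ∉ S → a + s ∉ Ioi a ∩ S := fun hS h => hS h.2
  refine ⟨fun s => indicator_nonneg (fun x _ => h0 x) _, fun s hs s' hs' hss' => ?_,
    fun s hs => ?_⟩
  · dsimp only
    by_cases hs'S : a + s' ∈ S
    · rw [indicator_of_mem (hmem hs' hs'S),
        indicator_of_mem (hmem hs (hSl ((add_le_add_iff_left a).2 hss') hs'S))]
      exact hanti (hpos hs) (hpos hs') ((add_le_add_iff_left a).2 hss')
    · rw [indicator_of_notMem (hnotMem hs'S)]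
      exact indicator_nonneg (fun x _ => h0 x) _
  · by_cases hsS : a + s ∈ S
    · have hcomp : ContinuousWithinAt (fun y => h (a + y)) (Ici s) s :=
        (hrc _ (hpos hs)).comp (continuous_const_add a).continuousWithinAt
          fun y hy => (add_le_add_iff_left a).2 hy
      refine hcomp.congr_of_eventuallyEq ?_ (indicator_of_mem (hmem hs hsS) _)
      filter_upwards [nhdsWithin_le_nhds ((hSo.preimage (continuous_const_add a)).mem_nhds hsS),
        self_mem_nhdsWithin] with y hyS hy
      exact indicator_of_mem (hmem (lt_of_lt_of_le hs hy) hyS) _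
    · refine continuousWithinAt_const.congr (fun y hy => ?_) (indicator_of_notMem (hnotMem hsS) _)
      exact indicator_of_notMem (hnotMem fun hyS => hsS (hSl ((add_le_add_iff_left a).2 hy) hyS)) _

theorem lintegral_mu_of_shapeDR {h : ℝ → ℝ} (hh : ShapeDR h) (t : ℝ) :
    ∫⁻ s in Ioc 0 t, ENNReal.ofReal (mu h s) = ∫⁻ x in Ioc 0 t, ENNReal.ofReal (h x) ∂m0 := by
  rw [m0_restrict_of_subset_Ioi Ioc_subset_Ioi_self]
  exact setLIntegral_congr_fun measurableSet_Ioc fun s hs => by rw [mu_eq_of_shapeDR hh hs.1]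

-- Shifted by `a`, the restriction to `Ioi a ∩ S` becomes its own decreasing rearrangement.
theorem lintegral_mu_indicator {h : ℝ → ℝ} (hh : ShapeDR h) {a : ℝ} (ha : 0 ≤ a)
    {S : Set ℝ} (hSo : IsOpen S) (hSl : IsLowerSet S) (t : ℝ) :
    ∫⁻ s in Ioc 0 t, ENNReal.ofReal (mu ((Ioi a ∩ S).indicator h) s) =
      ∫⁻ x in Ioi a ∩ S ∩ Ioc a (a + t), ENNReal.ofReal (h x) ∂m0 := by
  have hpos : Ioi a ∩ S ∩ Ioc a (a + t) ⊆ Ioi 0 :=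
    inter_subset_left.trans (inter_subset_left.trans (Ioi_subset_Ioi ha))
  rw [← mu_comp_add ha fun x hx => indicator_of_notMem (fun hm => not_lt.2 hx hm.1) _,
    lintegral_mu_of_shapeDR (shapeDR_indicator_comp_add hh ha hSo hSl),
    m0_restrict_of_subset_Ioi Ioc_subset_Ioi_self, m0_restrict_of_subset_Ioi hpos,
    (measurePreserving_add_left volume a).setLIntegral_comp_emb
      (measurableEmbedding_addLeft a) (fun x => ENNReal.ofReal ((Ioi a ∩ S).indicator h x)),
    image_const_add_Ioc, add_zero,
    ← setLIntegral_indicator (measurableSet_Ioi.inter hSo.measurableSet)]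
  exact lintegral_congr fun x => (congr_fun (indicator_comp_of_zero ENNReal.ofReal_zero) x).symm

theorem headMaj_indicator {f g : ℝ → ℝ} (hf : ShapeDR f) (hg : ShapeDR g) {a : ℝ} (ha : 0 ≤ a)
    {S : Set ℝ} (hSo : IsOpen S) (hSl : IsLowerSet S)
    (hΔ : ∫⁻ x in Ioi a ∩ S, ENNReal.ofReal (g x) ∂m0 ≤
      ∫⁻ x in Ioi a ∩ S, ENNReal.ofReal (f x) ∂m0)
    (hIoc : ∀ c, a < c → ∫⁻ x in Ioc a c, ENNReal.ofReal (g x) ∂m0 ≤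
      ∫⁻ x in Ioc a c, ENNReal.ofReal (f x) ∂m0) :
    HeadMaj ((Ioi a ∩ S).indicator g) ((Ioi a ∩ S).indicator f) := by
  intro t ht
  rw [lintegral_mu_indicator hg ha hSo hSl, lintegral_mu_indicator hf ha hSo hSl]
  -- `(a, a + t]` either stays inside `S` or swallows all of `Ioi a ∩ S`
  by_cases htS : a + t ∈ S
  · have : Ioi a ∩ S ∩ Ioc a (a + t) = Ioc a (a + t) :=
      inter_eq_right.2 fun x hx => ⟨hx.1, hSl hx.2 htS⟩
    rw [this]
    exact hIoc _ (by linarith)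
  · have : Ioi a ∩ S ∩ Ioc a (a + t) = Ioi a ∩ S :=
      inter_eq_left.2 fun x hx => ⟨hx.1, not_lt.1 fun hlt => htS (hSl hlt.le hx.2)⟩
    rwa [this]

def IsBalancedPiece (g f : ℝ → ℝ) (Δ : Set ℝ) : Prop :=
  MeasurableSet Δ ∧
    (∫⁻ x in Δ, ENNReal.ofReal (g x) ∂m0 = ∫⁻ x in Δ, ENNReal.ofReal (f x) ∂m0) ∧
    HeadMaj (Δ.indicator g) (Δ.indicator f)

theorem isBalancedPiece_empty (g f : ℝ → ℝ) : IsBalancedPiece g f ∅ :=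
  ⟨MeasurableSet.empty, by simp, fun t _ => by simp⟩

section majorization

variable {f g : ℝ → ℝ} (hf : ShapeDR f) (hg : ShapeDR g)
  (hfi : LocallyIntegrable f m0) (hgi : LocallyIntegrable g m0)

include hf hg hfi hgi

theorem excess_nonneg (hmaj : HeadMaj g f) (t : ℝ) : 0 ≤ excess f g t := by
  rcases le_or_gt t 0 with ht | ht
  · rw [excess_of_nonpos ht]
  have := excess_le_of_lintegral_Ioc_le hfi hgi hf.1 hg.1 ht.le
    (by simpa only [lintegral_mu_of_shapeDR hf, lintegral_mu_of_shapeDR hg] using hmaj t ht)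
  rwa [excess_of_nonpos le_rfl] at this

theorem shadow_excess_subset_Ioi (hmaj : HeadMaj g f) : shadow (excess f g) ⊆ Ioi 0 :=
  fun x ⟨y, _, hy⟩ => show 0 < x from not_le.1 fun hx =>
    (excess_nonneg hf hg hfi hgi hmaj y).not_gt (by rwa [excess_of_nonpos hx] at hy)

theorem mem_shadow_excess_of_lt {x : ℝ} (hx : 0 < x) (hlt : f x < g x) :
    x ∈ shadow (excess f g) := by
  obtain ⟨δ, hδ, hgap⟩ : ∃ δ > 0, f x + δ < g x - δ :=
    ⟨(g x - f x) / 3, by linarith, by linarith⟩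
  obtain ⟨c, hxc, hc⟩ := mem_nhdsGE_iff_exists_Ico_subset.1
    (((hf.2.2 x hx).eventually (gt_mem_nhds (lt_add_of_pos_right (f x) hδ))).and
      ((hg.2.2 x hx).eventually (lt_mem_nhds (sub_lt_self (g x) hδ))))
  obtain ⟨y, hxy, hyc⟩ := exists_between (show x < c from hxc)
  have hIoc : Ioc x y ⊆ Ico x c := fun z hz => ⟨hz.1.le, hz.2.trans_lt hyc⟩
  have hm : m0 (Ioc x y) = ENNReal.ofReal (y - x) := by
    rw [m0_apply_of_subset_Ioi fun z hz => hx.trans hz.1, Real.volume_Ioc]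
  have hconst : ∀ k : ℝ, ∫ _ in Ioc x y, k ∂m0 = (y - x) * k := fun k => by
    rw [setIntegral_const, smul_eq_mul, measureReal_def, hm, ENNReal.toReal_ofReal (by linarith)]
  have hfin : m0 (Ioc x y) ≠ ⊤ := hm ▸ ENNReal.ofReal_ne_top
  have hfle : ∫ z in Ioc x y, f z ∂m0 ≤ (y - x) * (f x + δ) := by
    rw [← hconst]
    exact setIntegral_mono_on (hfi.integrableOn_Ioc x y) (integrableOn_const hfin) measurableSet_Ioc
      fun z hz => (hc (hIoc hz)).1.le
  have hgge : (y - x) * (g x - δ) ≤ ∫ z in Ioc x y, g z ∂m0 := by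
    rw [← hconst]
    exact setIntegral_mono_on (integrableOn_const hfin) (hgi.integrableOn_Ioc x y)
      measurableSet_Ioc fun z hz => (hc (hIoc hz)).2.le
  have hprod : (y - x) * (f x + δ) < (y - x) * (g x - δ) :=
    mul_lt_mul_of_pos_left hgap (sub_pos.2 hxy)
  exact ⟨y, hxy, by linarith [excess_sub_excess hfi hgi hxy.le]⟩

theorem lintegral_Ioo_eq_of_subset_shadow {a b : ℝ} (hab : a < b) (ha : a ∉ shadow (excess f g))
    (hb : b ∉ shadow (excess f g)) (hsub : Ioo a b ⊆ shadow (excess f g)) :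
    ∫⁻ x in Ioo a b, ENNReal.ofReal (g x) ∂m0 = ∫⁻ x in Ioo a b, ENNReal.ofReal (f x) ∂m0 := by
  have hH := eq_of_Ioo_subset_shadow (continuous_excess hfi hgi) hab ha hb hsub
  rw [setLIntegral_congr Ioo_ae_eq_Ioc, setLIntegral_congr Ioo_ae_eq_Ioc]
  refine (lintegral_Ioc_le_of_excess_le hfi hgi hf.1 hg.1 hab.le hH.le).antisymm ?_
  simpa using lintegral_Ioc_le_add_of_excess_le hfi hgi hf.1 hg.1 hab.le le_rfl (by simp [hH])

theorem lintegral_Ioi_eq_of_subset_shadow {a : ℝ} (ha : a ∉ shadow (excess f g))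
    (hsub : Ioi a ⊆ shadow (excess f g)) :
    ∫⁻ x in Ioi a, ENNReal.ofReal (g x) ∂m0 = ∫⁻ x in Ioi a, ENNReal.ofReal (f x) ∂m0 := by
  have hU : ∀ h : ℝ → ℝ, ∫⁻ x in Ioi a, ENNReal.ofReal (h x) ∂m0 =
      ⨆ n : ℕ, ∫⁻ x in Ioc a (a + n), ENNReal.ofReal (h x) ∂m0 := fun h => by
    rw [← setLIntegral_iUnion_of_directed _ (Monotone.directed_le
      (f := fun n : ℕ => Ioc a (a + n)) fun m n hmn => Ioc_subset_Ioc_right (by simpa using hmn)),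
      iUnion_Ioc_eq_Ioi_self_iff.2 fun x _ => ?_]
    obtain ⟨n, hn⟩ := exists_nat_ge (x - a)
    exact ⟨n, by linarith⟩
  apply le_antisymm
  · rw [hU g]
    exact iSup_le fun n => (lintegral_Ioc_le_of_excess_le hfi hgi hf.1 hg.1
      (by simp) (le_of_notMem_shadow ha (by simp))).trans (lintegral_mono_set Ioc_subset_Ioi_self)
  · rw [hU f]
    refine iSup_le fun n => ENNReal.le_of_forall_pos_le_add fun ε hε _ => ?_
    obtain ⟨y, hy, hyH⟩ := exists_ge_le_add_of_Ioi_subset_shadow (continuous_excess hfi hgi) hsub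
      (a + n) (NNReal.coe_pos.2 hε)
    have hay : a ≤ y := le_trans (by simp) hy
    calc ∫⁻ x in Ioc a (a + n), ENNReal.ofReal (f x) ∂m0
        ≤ ∫⁻ x in Ioc a y, ENNReal.ofReal (f x) ∂m0 := lintegral_mono_set (Ioc_subset_Ioc_right hy)
      _ ≤ ∫⁻ x in Ioc a y, ENNReal.ofReal (g x) ∂m0 + ENNReal.ofReal ε :=
        lintegral_Ioc_le_add_of_excess_le hfi hgi hf.1 hg.1 hay ε.2 hyH
      _ ≤ ∫⁻ x in Ioi a, ENNReal.ofReal (g x) ∂m0 + ε := by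
        rw [ENNReal.ofReal_coe_nnreal]
        gcongr
        exact Ioc_subset_Ioi_self

theorem lintegral_Ioc_le_of_notMem_shadow {a c : ℝ} (ha : a ∉ shadow (excess f g)) (hac : a ≤ c) :
    ∫⁻ x in Ioc a c, ENNReal.ofReal (g x) ∂m0 ≤ ∫⁻ x in Ioc a c, ENNReal.ofReal (f x) ∂m0 :=
  lintegral_Ioc_le_of_excess_le hfi hgi hf.1 hg.1 hac (le_of_notMem_shadow ha hac)

theorem isBalancedPiece_Ioo {a b : ℝ} (ha0 : 0 ≤ a) (hab : a < b)
    (ha : a ∉ shadow (excess f g)) (hb : b ∉ shadow (excess f g))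
    (hsub : Ioo a b ⊆ shadow (excess f g)) : IsBalancedPiece g f (Ioo a b) := by
  have heq := lintegral_Ioo_eq_of_subset_shadow hf hg hfi hgi hab ha hb hsub
  refine ⟨measurableSet_Ioo, heq, ?_⟩
  rw [← Ioi_inter_Iio] at heq ⊢
  exact headMaj_indicator hf hg ha0 isOpen_Iio (isLowerSet_Iio b) heq.le
    fun c hc => lintegral_Ioc_le_of_notMem_shadow hf hg hfi hgi ha hc.le

theorem isBalancedPiece_Ioi {a : ℝ} (ha0 : 0 ≤ a) (ha : a ∉ shadow (excess f g))
    (hsub : Ioi a ⊆ shadow (excess f g)) : IsBalancedPiece g f (Ioi a) := by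
  have heq := lintegral_Ioi_eq_of_subset_shadow hf hg hfi hgi ha hsub
  refine ⟨measurableSet_Ioi, heq, ?_⟩
  simpa using headMaj_indicator hf hg ha0 isOpen_univ isLowerSet_univ (by simpa using heq.le)
    fun c hc => lintegral_Ioc_le_of_notMem_shadow hf hg hfi hgi ha hc.le

theorem isBalancedPiece_connectedComponentIn (hmaj : HeadMaj g f) {x : ℝ}
    (hx : x ∈ shadow (excess f g)) :
    IsBalancedPiece g f (connectedComponentIn (shadow (excess f g)) x) := by
  have hsub := connectedComponentIn_subset (shadow (excess f g)) x
  have hxC := mem_connectedComponentIn hx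
  obtain ⟨a, ha0, ha, ⟨b, hb, hC⟩ | hC⟩ := connectedComponentIn_eq_Ioo_or_Ioi
    (isOpen_shadow (continuous_excess hfi hgi)) (shadow_excess_subset_Ioi hf hg hfi hgi hmaj) hx
  all_goals rw [hC] at hsub hxC ⊢
  · exact isBalancedPiece_Ioo hf hg hfi hgi ha0 (hxC.1.trans hxC.2) ha hb hsub
  · exact isBalancedPiece_Ioi hf hg hfi hgi ha0 ha hsub

end majorization

end CSZ

open CSZ MeasureTheory ENNReal Set in
/-- second partition lemma, Lemma 4.4 of the paper.
Let `f, g ∈ L_1 + L_∞` with `f = μ(f)`, `g = μ(g)` and `g ≺≺_hd f`. Then there is a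
collection `{Δ_k}` of pairwise disjoint measurable sets such that on each `Δ_k` the
restrictions of `g` and `f` have equal integrals and `g·χ_{Δ_k} ≺≺_hd f·χ_{Δ_k}`, while
`g ≤ f` on the complement of `⋃ Δ_k` in `(0,∞)`. -/
theorem statement13 (f g : ℝ → ℝ)
    (hf : f ∈ sumSet (LpS 1) LinftyS) (hg : g ∈ sumSet (LpS 1) LinftyS)
    (hfs : ShapeDR f) (hgs : ShapeDR g) (hmaj : HeadMaj g f) :
    ∃ Δ : ℕ → Set ℝ,
      (∀ k, MeasurableSet (Δ k)) ∧
      (∀ k l, k ≠ l → Disjoint (Δ k) (Δ l)) ∧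
      (∀ k, (∫⁻ x in Δ k, ENNReal.ofReal (g x) ∂m0 =
               ∫⁻ x in Δ k, ENNReal.ofReal (f x) ∂m0) ∧
            HeadMaj ((Δ k).indicator g) ((Δ k).indicator f)) ∧
      (∀ x ∈ Set.Ioi (0:ℝ) \ ⋃ k, Δ k, g x ≤ f x) := by
  have hfi := locallyIntegrable_of_mem_sumSet hf
  have hgi := locallyIntegrable_of_mem_sumSet hg
  obtain ⟨Δ, hdisj, hcover, hΔ⟩ :=
    (isOpen_shadow (continuous_excess hfi hgi)).exists_enumeration_connectedComponentIn
  have hpiece : ∀ k, IsBalancedPiece g f (Δ k) := fun k => by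
    rcases hΔ k with h | ⟨x, hx, h⟩ <;> rw [h]
    exacts [isBalancedPiece_empty g f,
      isBalancedPiece_connectedComponentIn hfs hgs hfi hgi hmaj hx]
  refine ⟨Δ, fun k => (hpiece k).1, fun k l hkl => hdisj hkl, fun k => (hpiece k).2, ?_⟩
  rintro x ⟨hx0, hxΔ⟩
  by_contra! hlt
  exact hxΔ (hcover ▸ mem_shadow_excess_of_lt hfs hgs hfi hgi hx0 hlt)
end
end

section
/- Let a = (a_n)_{n≥0} and b = (b_n)_{n≥0} be two positive decreasing summable sequences such that for every n ≥ 0, Σ_{k≥n} b_k ≤ Σ_{k≥n} a_k (i.e. b ≺≺_tl a). Then there exists a sequence (Δ_n)_{n≥0} of subsets of ℤ_+ such that: (i) for every k ∈ ℤ_+, the number of indices n with k ∈ Δ_n is at most 3; (ii) Σ_{k∈Δ_n} a_k ≥ b_n for every n ∈ ℤ_+. -/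
/-! Let `A` and `B` be the tail sums of `a` and `b`. The points `A k` cut `(0, A 0]` into
segments `J_k` of length `a k`, and the points `B n` cut `(0, B 0]` into segments `I_n` of length
`b n`, all inside `(0, A 0]` because `B ≤ A`. Take `Δ_n = {n}` when `b n ≤ a n`, and otherwise
the set of `k` with `J_k` meeting `I_n`; these segments cover `I_n`, so their total length is at
least `b n`. A segment `J_k` meets at most two long segments `I_n` (those with `a n < b n`): a
segment `I_y` strictly between two segments meeting `J_k` lies inside `J_k`, and `y ≤ k`
because `B ≤ A`, so `b y ≤ a k ≤ a y`. -/

open Set Filter Topology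

noncomputable def tailSum (f : ℕ → ℝ) (n : ℕ) : ℝ := ∑' k, f (n + k)

section TailSum

variable {f : ℕ → ℝ}

theorem sum_range_add_tailSum (hf : Summable f) (n : ℕ) :
    ∑ i ∈ Finset.range n, f i + tailSum f n = ∑' i, f i := by
  simpa only [tailSum, add_comm n] using hf.sum_add_tsum_nat_add n

theorem sum_Ico_eq_tailSum_sub (hf : Summable f) {m n : ℕ} (hmn : m ≤ n) :
    ∑ i ∈ Finset.Ico m n, f i = tailSum f m - tailSum f n := by
  rw [Finset.sum_Ico_eq_sub f hmn]
  linarith [sum_range_add_tailSum hf m, sum_range_add_tailSum hf n]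

theorem tailSum_eq_add_tailSum_succ (hf : Summable f) (n : ℕ) :
    tailSum f n = f n + tailSum f (n + 1) := by
  have h := sum_Ico_eq_tailSum_sub hf (Nat.le_succ n)
  rw [Nat.Ico_succ_singleton, Finset.sum_singleton] at h
  linarith

theorem tailSum_nonneg (hf0 : ∀ n, 0 ≤ f n) (n : ℕ) : 0 ≤ tailSum f n :=
  tsum_nonneg fun k => hf0 (n + k)

theorem antitone_tailSum (hf0 : ∀ n, 0 ≤ f n) (hf : Summable f) : Antitone (tailSum f) :=
  antitone_nat_of_succ_le fun n => by
    linarith [tailSum_eq_add_tailSum_succ hf n, hf0 n]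

theorem tendsto_tailSum_atTop (f : ℕ → ℝ) : Tendsto (tailSum f) atTop (𝓝 0) :=
  (tendsto_sum_nat_add f).congr fun n => by simp only [tailSum, add_comm n]

theorem tsum_Ici_eq_tailSum (m : ℕ) : ∑' k : Ici m, f k = tailSum f m := by
  have hIci : Ici m = range (m + ·) := by
    ext k
    exact ⟨fun hk => ⟨k - m, by grind⟩, by rintro ⟨j, rfl⟩; exact Nat.le_add_right m j⟩
  rw [hIci, tsum_range f (add_right_injective m)]
  rfl

end TailSum

theorem exists_succ_lt_le_of_le {u : ℕ → ℝ} {c : ℝ} (h0 : c ≤ u 0) (h : ∃ n, u n < c) :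
    ∃ n, u (n + 1) < c ∧ c ≤ u n := by
  classical
  have hpos : Nat.find h ≠ 0 := fun h' => (h' ▸ Nat.find_spec h).not_ge h0
  refine ⟨Nat.find h - 1, ?_, not_lt.1 (Nat.find_min h (by omega))⟩
  rw [Nat.sub_add_cancel (Nat.one_le_iff_ne_zero.2 hpos)]
  exact Nat.find_spec h

theorem Nat.finite_and_ncard_le_two_of_not_lt_lt {s : Set ℕ}
    (h : ∀ x ∈ s, ∀ y ∈ s, ∀ z ∈ s, x < y → y < z → False) : s.Finite ∧ s.ncard ≤ 2 := by
  rcases s.eq_empty_or_nonempty with rfl | hne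
  · simp
  set x₀ := sInf s
  have hx₀ : x₀ ∈ s := Nat.sInf_mem hne
  have hrest : (s \ {x₀}).Subsingleton := by
    have hlt : ∀ y ∈ s \ {x₀}, x₀ < y := fun y hy => (Nat.sInf_le hy.1).lt_of_ne' hy.2
    intro y hy z hz
    by_contra hyz
    rcases Ne.lt_or_gt hyz with hyz | hzy
    · exact h x₀ hx₀ y hy.1 z hz.1 (hlt y hy) hyz
    · exact h x₀ hx₀ z hz.1 y hy.1 (hlt z hz) hzy
  have hfin : s.Finite := by
    simpa [Set.insert_sdiff_singleton, Set.insert_eq_of_mem hx₀] using hrest.finite.insert x₀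
  refine ⟨hfin, ?_⟩
  rw [← Set.ncard_sdiff_singleton_add_one hx₀ hfin]
  have := (Set.ncard_le_one hrest.finite).2 hrest
  omega

def overlapIndices (A : ℕ → ℝ) (lo hi : ℝ) : Set ℕ := {k | A (k + 1) < hi ∧ lo < A k}

theorem sub_le_tsum_overlapIndices {a : ℕ → ℝ} (ha0 : ∀ n, 0 ≤ a n) (ha : Summable a)
    {lo hi : ℝ} (hlo : 0 ≤ lo) (hlohi : lo < hi) (hhi : hi ≤ tailSum a 0) :
    hi - lo ≤ ∑' k : overlapIndices (tailSum a) lo hi, a k := by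
  classical
  have hA := antitone_tailSum ha0 ha
  obtain ⟨k₁, hk₁, hk₁'⟩ := exists_succ_lt_le_of_le hhi
    ((tendsto_tailSum_atTop a).eventually_lt_const (hlo.trans_lt hlohi)).exists
  have hmem : ∀ k, k ∈ overlapIndices (tailSum a) lo hi ↔ k₁ ≤ k ∧ lo < tailSum a k :=
    fun k => and_congr_left fun _ =>
      ⟨fun h => not_lt.1 fun hk => (hk₁'.trans (hA (Nat.succ_le_of_lt hk))).not_gt h,
        fun hk => (hA (Nat.succ_le_succ hk)).trans_lt hk₁⟩
  by_cases hfin : ∃ k, tailSum a k ≤ lo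
  · set k₂ := Nat.find hfin
    have hk₂ : tailSum a k₂ ≤ lo := Nat.find_spec hfin
    have hk₁₂ : k₁ ≤ k₂ := le_of_lt <| hA.reflect_lt <| hk₂.trans_lt (hlohi.trans_le hk₁')
    have hIco : overlapIndices (tailSum a) lo hi = Finset.Ico k₁ k₂ := by
      ext k
      rw [hmem, Finset.coe_Ico, mem_Ico]
      refine and_congr_right fun _ => ⟨fun hk => ?_, fun hk => not_le.1 (Nat.find_min hfin hk)⟩
      exact not_le.1 fun hk' => hk.not_ge ((hA hk').trans hk₂)
    rw [hIco, Finset.tsum_subtype', sum_Ico_eq_tailSum_sub ha hk₁₂]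
    linarith
  · push Not at hfin
    have hIci : overlapIndices (tailSum a) lo hi = Ici k₁ := by
      ext k
      simp only [hmem, hfin k, and_true, mem_Ici]
    rw [hIci, tsum_Ici_eq_tailSum]
    linarith

section Majorization

variable {a b : ℕ → ℝ}

theorem lt_of_mem_overlapIndices_of_lt_of_lt (hb0 : ∀ n, 0 ≤ b n) (hadec : Antitone a)
    (ha : Summable a) (hb : Summable b) (hmaj : ∀ n, tailSum b n ≤ tailSum a n) {k x y z : ℕ}
    (hx : k ∈ overlapIndices (tailSum a) (tailSum b (x + 1)) (tailSum b x))
    (hz : k ∈ overlapIndices (tailSum a) (tailSum b (z + 1)) (tailSum b z))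
    (hxy : x < y) (hyz : y < z) : b y < a y := by
  have hB := antitone_tailSum hb0 hb
  have hyk : y ≤ k := by
    by_contra! hky
    have : tailSum b z ≤ tailSum b (k + 1) := hB (by omega)
    linarith [hz.1, hmaj (k + 1)]
  have : tailSum b y ≤ tailSum b (x + 1) := hB hxy
  linarith [hx.2, hz.1, hB hyz, hadec hyk, tailSum_eq_add_tailSum_succ ha k,
    tailSum_eq_add_tailSum_succ hb y]

noncomputable def coveringSets (a b : ℕ → ℝ) (n : ℕ) : Set ℕ :=
  if b n ≤ a n then {n} else overlapIndices (tailSum a) (tailSum b (n + 1)) (tailSum b n)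

theorem le_tsum_coveringSets (ha0 : ∀ n, 0 ≤ a n) (hb0 : ∀ n, 0 ≤ b n) (ha : Summable a)
    (hb : Summable b) (hmaj : ∀ n, tailSum b n ≤ tailSum a n) (n : ℕ) :
    b n ≤ ∑' k : coveringSets a b n, a k := by
  by_cases hn : b n ≤ a n
  · rwa [coveringSets, if_pos hn, tsum_singleton]
  · rw [coveringSets, if_neg hn]
    have hBn := tailSum_eq_add_tailSum_succ hb n
    have := sub_le_tsum_overlapIndices ha0 ha (tailSum_nonneg hb0 (n + 1))
      (by linarith [ha0 n]) ((antitone_tailSum hb0 hb (Nat.zero_le n)).trans (hmaj 0))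
    linarith

theorem finite_setOf_mem_coveringSets_and_ncard_le_three (hb0 : ∀ n, 0 ≤ b n)
    (hadec : Antitone a) (ha : Summable a) (hb : Summable b)
    (hmaj : ∀ n, tailSum b n ≤ tailSum a n) (k : ℕ) :
    {n | k ∈ coveringSets a b n}.Finite ∧ {n | k ∈ coveringSets a b n}.ncard ≤ 3 := by
  set long := {n | a n < b n ∧ k ∈ overlapIndices (tailSum a) (tailSum b (n + 1)) (tailSum b n)}
  have hlong : long.Finite ∧ long.ncard ≤ 2 :=
    Nat.finite_and_ncard_le_two_of_not_lt_lt fun x hx y hy z hz hxy hyz =>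
      lt_asymm hy.1 (lt_of_mem_overlapIndices_of_lt_of_lt hb0 hadec ha hb hmaj hx.2 hz.2 hxy hyz)
  have hsub : {n | k ∈ coveringSets a b n} ⊆ insert k long := by
    intro n (hn : k ∈ coveringSets a b n)
    by_cases hab : b n ≤ a n
    · rw [coveringSets, if_pos hab] at hn
      exact Or.inl hn.symm
    · rw [coveringSets, if_neg hab] at hn
      exact Or.inr ⟨not_le.1 hab, hn⟩
  have hfin := hlong.1.insert k
  exact ⟨hfin.subset hsub,
    (ncard_le_ncard hsub hfin).trans ((ncard_insert_le k long).trans (by omega))⟩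

end Majorization

theorem statement18_general (a b : ℕ → ℝ)
    (ha0 : ∀ n, 0 ≤ a n) (hb0 : ∀ n, 0 ≤ b n)
    (hadec : Antitone a)
    (hasum : Summable a) (hbsum : Summable b)
    (hmaj : ∀ n : ℕ, (∑' k : ℕ, b (n + k)) ≤ ∑' k : ℕ, a (n + k)) :
    ∃ Δ : ℕ → Set ℕ,
      (∀ k : ℕ, {n : ℕ | k ∈ Δ n}.Finite ∧ {n : ℕ | k ∈ Δ n}.ncard ≤ 3) ∧
      (∀ n : ℕ, b n ≤ ∑' k : (Δ n), a k) :=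
  ⟨coveringSets a b,
    finite_setOf_mem_coveringSets_and_ncard_le_three hb0 hadec hasum hbsum hmaj,
    le_tsum_coveringSets ha0 hb0 hasum hbsum hmaj⟩

/-- sequence partition lemma, Lemma 6.1 of the paper.
Let `a` and `b` be two positive decreasing summable sequences such that all tail sums of
`b` are dominated by those of `a` (i.e. `b ≺≺_tl a`). Then there is a sequence `(Δ_n)` of
subsets of `ℤ_+` such that every `k ∈ ℤ_+` belongs to at most `3` of the sets `Δ_n`, and
`Σ_{k ∈ Δ_n} a_k ≥ b_n` for every `n`. -/
theorem statement18 (a b : ℕ → ℝ)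
    (ha0 : ∀ n, 0 ≤ a n) (hb0 : ∀ n, 0 ≤ b n)
    (hadec : Antitone a) (hbdec : Antitone b)
    (hasum : Summable a) (hbsum : Summable b)
    (hmaj : ∀ n : ℕ, (∑' k : ℕ, b (n + k)) ≤ ∑' k : ℕ, a (n + k)) :
    ∃ Δ : ℕ → Set ℕ,
      (∀ k : ℕ, {n : ℕ | k ∈ Δ n}.Finite ∧ {n : ℕ | k ∈ Δ n}.ncard ≤ 3) ∧
      (∀ n : ℕ, b n ≤ ∑' k : (Δ n), a k) :=
  statement18_general a b ha0 hb0 hadec hasum hbsum hmaj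
end
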